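/- In the iterative peeling process producing disjoint sets A₁,...,A_s with Σᵢ e(A_i, V∖A_i) ≤ 2c₂φ*·vol(P) where P = A₁∪...∪A_s, call an index i bad if vol_{V_{i-1}}(A_i) < (1 − 10c₂φ*)·vol(A_i). Then Σ_{i bad} vol(A_i) < (1/5)·vol(P), and hence Σ_{i good} vol(A_i) ≥ (4/5)·vol(P). -/

import Mathlib

/-!
A bad index `i` loses more than a `10c₂φ*` fraction of the volume of `A_i` to edges leaving
`A_i`: the edges inside `A_i` are counted by `vol_{V_{i-1}}(A_i)` since `A_i ⊆ V_{i-1}`. Summing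
over bad indices and using the total cut bound `2c₂φ*·vol(P)` gives `Σ_{bad} vol(A_i) < vol(P)/5`;
the `A_i` are disjoint, so their volumes add up to `vol(P)`.
-/

open Finset

section Conductance

variable {V : Type*} [Fintype V] [DecidableEq V] (G : SimpleGraph V) [DecidableRel G.Adj]

/-- Number of ordered adjacent pairs of `G` from `S` to `T`. -/
def eG (S T : Finset V) : ℕ := ∑ u ∈ S, ∑ v ∈ T, (if G.Adj u v then 1 else 0)

/-- Volume of `T` in `G`. -/
def volG (T : Finset V) : ℕ := ∑ v ∈ T, G.degree v

/-- Volume of `T` inside the induced subgraph `G[S]`. -/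
def volIn (S T : Finset V) : ℕ := ∑ t ∈ T, (S.filter (G.Adj t)).card

end Conductance

open Function

section Conductance

variable {V : Type*} (G : SimpleGraph V) [DecidableRel G.Adj]

theorem eG_self_le_volIn {S A : Finset V} (h : A ⊆ S) : eG G A A ≤ volIn G S A :=
  sum_le_sum fun u _ => by
    simpa only [sum_boole, Nat.cast_id] using card_le_card (filter_subset_filter _ h)

variable [Fintype V] [DecidableEq V]

theorem eG_self_add_eG_compl (A : Finset V) : eG G A A + eG G A Aᶜ = volG G A := by
  unfold eG volG
  rw [← sum_add_distrib]
  refine sum_congr rfl fun u _ => ?_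
  rw [sum_add_sum_compl, sum_boole, Nat.cast_id, ← SimpleGraph.neighborFinset_eq_filter,
    SimpleGraph.card_neighborFinset_eq_degree]

theorem volG_le_volIn_add_eG_compl {S A : Finset V} (h : A ⊆ S) :
    volG G A ≤ volIn G S A + eG G A Aᶜ := by
  rw [← eG_self_add_eG_compl]
  exact Nat.add_le_add_right (eG_self_le_volIn G h) _

theorem volG_biUnion {ι : Type*} (s : Finset ι) {A : ι → Finset V}
    (hA : (s : Set ι).PairwiseDisjoint A) : volG G (s.biUnion A) = ∑ i ∈ s, volG G (A i) :=
  sum_biUnion hA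

end Conductance

theorem pairwise_disjoint_of_subset_compl_biUnion_lt {ι α : Type*} [Fintype ι] [LinearOrder ι]
    [Fintype α] [DecidableEq α] {A : ι → Finset α}
    (hA : ∀ i, A i ⊆ univ \ (univ.filter (· < i)).biUnion A) : Pairwise (Disjoint on A) := by
  refine (pairwise_disjoint_on A).2 fun i j hij => disjoint_left.2 fun v hvi hvj => ?_
  exact (mem_sdiff.1 (hA j hvj)).2 (mem_biUnion.2 ⟨i, mem_filter.2 ⟨mem_univ i, hij⟩, hvi⟩)

theorem sum_filter_lt_of_mul_lt {ι : Type*} (s : Finset ι) (p : ι → Prop) [DecidablePred p]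
    {v e : ι → ℝ} {c B : ℝ} (hc : 0 < c) (hB : 0 < B) (he : ∀ i ∈ s, 0 ≤ e i)
    (hp : ∀ i ∈ s, p i → c * v i < e i) (hsum : ∑ i ∈ s, e i ≤ c * B) :
    ∑ i ∈ s.filter p, v i < B := by
  rcases (s.filter p).eq_empty_or_nonempty with hempty | hne
  · simpa [hempty] using hB
  refine lt_of_mul_lt_mul_left ?_ hc.le
  calc c * ∑ i ∈ s.filter p, v i
      < ∑ i ∈ s.filter p, e i := by
        rw [mul_sum]
        exact sum_lt_sum_of_nonempty hne fun i hi =>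
          hp i (mem_filter.1 hi).1 (mem_filter.1 hi).2
    _ ≤ ∑ i ∈ s, e i := sum_le_sum_of_subset_of_nonneg (filter_subset _ _) fun i hi _ => he i hi
    _ ≤ c * B := hsum

/-- In the iterative peeling process producing disjoint sets `A₁,…,A_s` with
`Σᵢ e(A_i, V∖A_i) ≤ 2c₂φ*·vol(P)` where `P = A₁ ∪ ⋯ ∪ A_s`, call an index `i` bad
if `vol_{V_{i-1}}(A_i) < (1 − 10c₂φ*)·vol(A_i)`.  Then `Σ_{i bad} vol(A_i) < vol(P)/5`
and hence `Σ_{i good} vol(A_i) ≥ (4/5)·vol(P)`. -/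
theorem bad_indices_small_volume
    {V : Type*} [Fintype V] [DecidableEq V]
    (G : SimpleGraph V) [DecidableRel G.Adj]
    (s : ℕ) (A : Fin s → Finset V)
    (Vprev : Fin s → Finset V)
    (hVprev : ∀ i : Fin s,
      Vprev i = Finset.univ \ (Finset.univ.filter fun j : Fin s => j < i).biUnion A)
    (hA : ∀ i : Fin s, A i ⊆ Vprev i)
    (c₂ φstar : ℝ) (h0 : 0 < c₂ * φstar)
    (P : Finset V) (hP : P = Finset.univ.biUnion A)
    (hvolP : 0 < (volG G P : ℝ))
    (hcut : (∑ i : Fin s, (eG G (A i) (A i)ᶜ : ℝ))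
      ≤ 2 * (c₂ * φstar) * volG G P)
    (bad : Fin s → Prop) [DecidablePred bad]
    (hbad : ∀ i : Fin s, bad i ↔
      (volIn G (Vprev i) (A i) : ℝ) < (1 - 10 * (c₂ * φstar)) * (volG G (A i) : ℝ)) :
    (∑ i ∈ Finset.univ.filter bad, (volG G (A i) : ℝ)) < (volG G P : ℝ) / 5 ∧
      (4 / 5 : ℝ) * (volG G P : ℝ)
        ≤ ∑ i ∈ Finset.univ.filter (fun i => ¬ bad i), (volG G (A i) : ℝ) := by
  have hdisj : Pairwise (Disjoint on A) :=
    pairwise_disjoint_of_subset_compl_biUnion_lt fun i => hVprev i ▸ hA i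
  have hvolP_sum : (volG G P : ℝ) = ∑ i, (volG G (A i) : ℝ) := by
    rw [hP, volG_biUnion G _ (hdisj.set_pairwise _)]
    push_cast
    rfl
  have hbad_cut : ∀ i ∈ univ, bad i →
      10 * (c₂ * φstar) * (volG G (A i) : ℝ) < (eG G (A i) (A i)ᶜ : ℝ) := fun i _ hi => by
    have hvol : (volG G (A i) : ℝ) ≤ volIn G (Vprev i) (A i) + eG G (A i) (A i)ᶜ := by
      exact_mod_cast volG_le_volIn_add_eG_compl G (hA i)
    linarith [(hbad i).1 hi]
  have hbad_sum : ∑ i ∈ univ.filter bad, (volG G (A i) : ℝ) < (volG G P : ℝ) / 5 :=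
    sum_filter_lt_of_mul_lt univ bad (by positivity) (by positivity) (fun i _ => by positivity)
      hbad_cut (by linarith)
  refine ⟨hbad_sum, ?_⟩
  linarith [sum_filter_add_sum_filter_not univ bad fun i => (volG G (A i) : ℝ)]
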